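/- If Λ(x) is positive definite and u ∈ ℝ^U satisfies ‖u − x‖_x < 1 (so that Λ(u) is positive definite and the local norm ‖·‖_u is defined), then for every nonzero v ∈ ℝ^U one has (1 − ‖u − x‖_x)·‖v‖_x ≤ ‖v‖_u ≤ (1 − ‖u − x‖_x)⁻¹·‖v‖_x. -/

import Mathlib

open Matrix

/-- The gradient of the barrier `f(x) = -log det Λ(x)`:
`g(x)_i = -tr(Λ(x)⁻¹ · Λ(e_i))` (with the total matrix inverse, `0` for singular matrices). -/
noncomputable def grad {U L : ℕ} (Lam : (Fin U → ℝ) →ₗ[ℝ] Matrix (Fin L) (Fin L) ℝ)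
    (x : Fin U → ℝ) : Fin U → ℝ :=
  fun i => -((Lam x)⁻¹ * Lam (Pi.single i 1)).trace

/-- The Hessian of the barrier: `H(x)_{ij} = tr(Λ(x)⁻¹ Λ(e_i) Λ(x)⁻¹ Λ(e_j))`. -/
noncomputable def hess {U L : ℕ} (Lam : (Fin U → ℝ) →ₗ[ℝ] Matrix (Fin L) (Fin L) ℝ)
    (x : Fin U → ℝ) : Matrix (Fin U) (Fin U) ℝ :=
  Matrix.of fun i j =>
    ((Lam x)⁻¹ * Lam (Pi.single i 1) * (Lam x)⁻¹ * Lam (Pi.single j 1)).trace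

/-- The local norm `‖v‖_x = (vᵀ H(x) v)^{1/2}`. -/
noncomputable def locNorm {U L : ℕ} (Lam : (Fin U → ℝ) →ₗ[ℝ] Matrix (Fin L) (Fin L) ℝ)
    (x v : Fin U → ℝ) : ℝ :=
  Real.sqrt (v ⬝ᵥ (hess Lam x).mulVec v)

/-- The dual local norm `‖t‖*_x = (tᵀ H(x)⁻¹ t)^{1/2}`. -/
noncomputable def dualNorm {U L : ℕ} (Lam : (Fin U → ℝ) →ₗ[ℝ] Matrix (Fin L) (Fin L) ℝ)
    (x t : Fin U → ℝ) : ℝ :=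
  Real.sqrt (t ⬝ᵥ (hess Lam x)⁻¹.mulVec t)

/-!
Write `A = Λ(x)`, `B = Λ(u)`, `S = Λ(u - x) = B - A` and `‖T‖_A = √tr(A⁻¹ T A⁻¹ T)`, so that
`‖v‖_x = ‖Λ v‖_A` and `r := ‖u - x‖_x = ‖S‖_A`. Cauchy–Schwarz for the trace form gives
`|wᵀ S w| ≤ r · wᵀ A w`, i.e. `(1 - r) A ≤ B ≤ (1 + r) A` in the Loewner order. Inversion
reverses the Loewner order and `C ↦ tr(C T C T)` is monotone on positive semidefinite `C`, so
`(1 + r)⁻¹ ‖T‖_A ≤ ‖T‖_B ≤ (1 - r)⁻¹ ‖T‖_A`; finally `1 - r ≤ (1 + r)⁻¹`.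
-/

open scoped MatrixOrder ComplexOrder

namespace Matrix

variable {n 𝕜 : Type*} [RCLike 𝕜]

lemma PosDef.of_le {A B : Matrix n n 𝕜} (hA : A.PosDef) (hAB : A ≤ B) : B.PosDef := by
  simpa using hA.add_posSemidef hAB

variable [Fintype n]

lemma PosSemidef.trace_mul_nonneg {P Q : Matrix n n 𝕜} (hP : P.PosSemidef) (hQ : Q.PosSemidef) :
    0 ≤ (P * Q).trace := by
  classical
  obtain ⟨B, rfl⟩ := CStarAlgebra.nonneg_iff_eq_star_mul_self.mp hP.nonneg
  rw [star_eq_conjTranspose, Matrix.mul_assoc, trace_mul_comm, Matrix.mul_assoc]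
  simpa only [Matrix.mul_assoc] using (hQ.mul_mul_conjTranspose_same B).trace_nonneg

lemma PosSemidef.trace_mul_mul_mul_nonneg {P Q S : Matrix n n 𝕜} (hP : P.PosSemidef)
    (hQ : Q.PosSemidef) (hS : S.IsHermitian) : 0 ≤ (P * S * Q * S).trace := by
  have := hP.trace_mul_nonneg (hQ.conjTranspose_mul_mul_same S)
  rwa [hS.eq, ← Matrix.mul_assoc, ← Matrix.mul_assoc] at this

lemma trace_mul_mul_mul_le_of_le {C₁ C₂ S : Matrix n n 𝕜} (h₁ : 0 ≤ C₁) (h₁₂ : C₁ ≤ C₂)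
    (hS : S.IsHermitian) : (C₁ * S * C₁ * S).trace ≤ (C₂ * S * C₂ * S).trace := by
  have hD : (C₂ - C₁).PosSemidef := h₁₂
  have hsplit : (C₂ * S * C₂ * S).trace = (C₁ * S * C₁ * S).trace
      + ((C₂ - C₁) * S * C₂ * S).trace + (C₁ * S * (C₂ - C₁) * S).trace := by
    simp only [Matrix.sub_mul, Matrix.mul_sub, trace_sub]
    ring
  rw [hsplit]
  exact le_add_of_le_of_nonneg
    (le_add_of_nonneg_right (hD.trace_mul_mul_mul_nonneg (h₁.trans h₁₂).posSemidef hS))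
    (h₁.posSemidef.trace_mul_mul_mul_nonneg hD hS)

/-- Both `B - A` and `A⁻¹ - B⁻¹` are Schur complements in the block matrix `!![B, 1; 1, A⁻¹]`. -/
lemma PosDef.inv_le_inv [DecidableEq n] {A B : Matrix n n 𝕜} (hA : A.PosDef) (hAB : A ≤ B) :
    B⁻¹ ≤ A⁻¹ := by
  have hB : B.PosDef := hA.of_le hAB
  have := hA.isUnit.invertible
  have := hA.inv.isUnit.invertible
  have := hB.isUnit.invertible
  have hblock := (PosDef.fromBlocks₂₂ B 1 hA.inv).mpr (by simpa using Matrix.le_iff.mp hAB)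
  simpa [Matrix.le_iff] using (PosDef.fromBlocks₁₁ 1 A⁻¹ hB).mp (by simpa using hblock)

/-- Cauchy–Schwarz for the semi-inner product `(X, Y) ↦ tr(P X P Y)`, via the discriminant. -/
lemma sq_trace_mul_mul_mul_le {P X Y : Matrix n n ℝ} (hP : P.PosSemidef) (hX : X.IsHermitian)
    (hY : Y.IsHermitian) :
    (P * X * P * Y).trace ^ 2 ≤ (P * X * P * X).trace * (P * Y * P * Y).trace := by
  have hcomm : (P * Y * P * X).trace = (P * X * P * Y).trace := by
    rw [Matrix.mul_assoc _ P X, trace_mul_comm, ← Matrix.mul_assoc]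
  have hquad : ∀ t : ℝ, 0 ≤ (P * Y * P * Y).trace * (t * t) + 2 * (P * X * P * Y).trace * t
      + (P * X * P * X).trace := fun t => by
    have := hP.trace_mul_mul_mul_nonneg hP (hX.add (hY.smul (IsSelfAdjoint.all t)))
    simp only [Matrix.mul_add, Matrix.add_mul, Matrix.mul_smul, Matrix.smul_mul, trace_add,
      trace_smul, smul_eq_mul, hcomm] at this
    linarith
  have := discrim_le_zero hquad
  rw [discrim] at this
  nlinarith

variable [DecidableEq n]

/-- Cauchy–Schwarz for `(X, Y) ↦ tr(A⁻¹ X A⁻¹ Y)` applied to `X = S` and `Y = A w wᵀ A`. -/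
lemma PosDef.sq_dotProduct_mulVec_le {A S : Matrix n n ℝ} (hA : A.PosDef) (hS : S.IsHermitian)
    (w : n → ℝ) :
    (w ⬝ᵥ S *ᵥ w) ^ 2 ≤ (A⁻¹ * S * A⁻¹ * S).trace * (w ⬝ᵥ A *ᵥ w) ^ 2 := by
  have := hA.isUnit.invertible
  set W := vecMulVec w w
  have hW : W.PosSemidef := by simpa using posSemidef_vecMulVec_self_star w
  have hY : (A * W * A).IsHermitian := by
    have := (hW.conjTranspose_mul_mul_same A).isHermitian
    rwa [hA.isHermitian.eq] at this
  have h1 : (A⁻¹ * S * A⁻¹ * (A * W * A)).trace = w ⬝ᵥ S *ᵥ w := by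
    calc (A⁻¹ * S * A⁻¹ * (A * W * A)).trace = (A⁻¹ * (S * W * A)).trace := by
          simp [Matrix.mul_assoc]
      _ = (S * W).trace := by rw [trace_mul_comm]; simp [Matrix.mul_assoc]
      _ = w ⬝ᵥ S *ᵥ w := by rw [mul_vecMulVec, trace_vecMulVec, dotProduct_comm]
  have h2 : (A⁻¹ * (A * W * A) * A⁻¹ * (A * W * A)).trace = (w ⬝ᵥ A *ᵥ w) ^ 2 := by
    calc (A⁻¹ * (A * W * A) * A⁻¹ * (A * W * A)).trace = (W * A * (W * A)).trace := by
          simp [Matrix.mul_assoc]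
      _ = (w ⬝ᵥ A *ᵥ w) ^ 2 := by
          rw [vecMulVec_mul, vecMulVec_mul_vecMulVec, trace_vecMulVec, dotProduct_smul,
            smul_eq_mul, dotProduct_mulVec, dotProduct_comm w, sq]
  simpa [h1, h2] using sq_trace_mul_mul_mul_le hA.inv.posSemidef hS hY

/-- The norm of the direction `T` in the Hessian of `-log det` at `A`. -/
noncomputable def logDetHessNorm (A T : Matrix n n ℝ) : ℝ :=
  √((A⁻¹ * T * A⁻¹ * T).trace)

variable {A B S T : Matrix n n ℝ}

lemma PosDef.abs_dotProduct_mulVec_le (hA : A.PosDef) (hS : S.IsHermitian) (w : n → ℝ) :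
    |w ⬝ᵥ S *ᵥ w| ≤ logDetHessNorm A S * (w ⬝ᵥ A *ᵥ w) := by
  have htrace : 0 ≤ (A⁻¹ * S * A⁻¹ * S).trace :=
    hA.inv.posSemidef.trace_mul_mul_mul_nonneg hA.inv.posSemidef hS
  have hAw : 0 ≤ w ⬝ᵥ A *ᵥ w := by simpa using hA.posSemidef.dotProduct_mulVec_nonneg w
  refine abs_le_of_sq_le_sq ?_ (mul_nonneg (Real.sqrt_nonneg _) hAw)
  rw [mul_pow, logDetHessNorm, Real.sq_sqrt htrace]
  exact hA.sq_dotProduct_mulVec_le hS w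

lemma PosDef.neg_smul_le_and_le_smul (hA : A.PosDef) (hS : S.IsHermitian) :
    -(logDetHessNorm A S • A) ≤ S ∧ S ≤ logDetHessNorm A S • A := by
  have hAS := hA.isHermitian.smul (IsSelfAdjoint.all (logDetHessNorm A S))
  constructor
  · refine PosSemidef.of_dotProduct_mulVec_nonneg (by simpa using hS.add hAS) fun w => ?_
    simp only [star_trivial, sub_neg_eq_add, add_mulVec, smul_mulVec, dotProduct_add,
      dotProduct_smul, smul_eq_mul]
    linarith [abs_le.mp (hA.abs_dotProduct_mulVec_le hS w)]
  · refine PosSemidef.of_dotProduct_mulVec_nonneg (hAS.sub hS) fun w => ?_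
    simp only [star_trivial, sub_mulVec, smul_mulVec, dotProduct_sub, dotProduct_smul,
      smul_eq_mul]
    linarith [abs_le.mp (hA.abs_dotProduct_mulVec_le hS w)]

lemma logDetHessNorm_smul (hA : IsUnit A) {c : ℝ} (hc : 0 < c) (T : Matrix n n ℝ) :
    logDetHessNorm (c • A) T = c⁻¹ * logDetHessNorm A T := by
  have hinv : (c • A)⁻¹ = c⁻¹ • A⁻¹ :=
    inv_smul' A (Units.mk0 c hc.ne') ((isUnit_iff_isUnit_det A).mp hA)
  rw [logDetHessNorm, logDetHessNorm, hinv]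
  simp only [Matrix.smul_mul, Matrix.mul_smul, trace_smul, smul_eq_mul, ← mul_assoc]
  rw [Real.sqrt_mul (mul_self_nonneg _), Real.sqrt_mul_self (inv_nonneg.mpr hc.le)]

lemma PosDef.logDetHessNorm_le_of_le (hA : A.PosDef) (hAB : A ≤ B) (hT : T.IsHermitian) :
    logDetHessNorm B T ≤ logDetHessNorm A T :=
  Real.sqrt_le_sqrt <| trace_mul_mul_mul_le_of_le (hA.of_le hAB).inv.posSemidef.nonneg
    (hA.inv_le_inv hAB) hT

end Matrix

lemma dotProduct_hess_mulVec {U L : ℕ} (Lam : (Fin U → ℝ) →ₗ[ℝ] Matrix (Fin L) (Fin L) ℝ)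
    (x v w : Fin U → ℝ) :
    v ⬝ᵥ hess Lam x *ᵥ w = ((Lam x)⁻¹ * Lam v * (Lam x)⁻¹ * Lam w).trace := by
  let β : (Fin U → ℝ) →ₗ[ℝ] (Fin U → ℝ) →ₗ[ℝ] ℝ :=
    LinearMap.mk₂ ℝ (fun v w => ((Lam x)⁻¹ * Lam v * (Lam x)⁻¹ * Lam w).trace)
      (fun _ _ _ => by simp [Matrix.mul_add, Matrix.add_mul]) (fun _ _ _ => by simp)
      (fun _ _ _ => by simp [Matrix.mul_add]) (fun _ _ _ => by simp)
  have hβ : hess Lam x = LinearMap.toMatrix₂' ℝ β := rfl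
  rw [← Matrix.toLinearMap₂'_apply', hβ, Matrix.toLinearMap₂'_toMatrix']
  rfl

lemma locNorm_eq_logDetHessNorm {U L : ℕ} (Lam : (Fin U → ℝ) →ₗ[ℝ] Matrix (Fin L) (Fin L) ℝ)
    (x v : Fin U → ℝ) : locNorm Lam x v = Matrix.logDetHessNorm (Lam x) (Lam v) := by
  rw [locNorm, dotProduct_hess_mulVec]
  rfl

theorem stmt1_general {U L : ℕ}
    (Lam : (Fin U → ℝ) →ₗ[ℝ] Matrix (Fin L) (Fin L) ℝ)
    (hsym : ∀ v, (Lam v).IsSymm)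
    (x u : Fin U → ℝ) (hx : (Lam x).PosDef)
    (hu : locNorm Lam x (u - x) < 1)
    (v : Fin U → ℝ) :
    (1 - locNorm Lam x (u - x)) * locNorm Lam x v ≤ locNorm Lam u v ∧
      locNorm Lam u v ≤ (1 - locNorm Lam x (u - x))⁻¹ * locNorm Lam x v := by
  have hherm (w : Fin U → ℝ) : (Lam w).IsHermitian := isHermitian_iff_isSymm.mpr (hsym w)
  set r := locNorm Lam x (u - x) with hr
  have hr0 : 0 ≤ r := Real.sqrt_nonneg _
  have hr1 : 0 < 1 - r := sub_pos.mpr hu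
  obtain ⟨hdiff_lb, hdiff_ub⟩ := hx.neg_smul_le_and_le_smul (hherm (u - x))
  rw [← locNorm_eq_logDetHessNorm, ← hr, map_sub] at hdiff_lb hdiff_ub
  have hlower : (1 - r) • Lam x ≤ Lam u :=
    Matrix.le_iff.mpr (by convert Matrix.le_iff.mp hdiff_lb using 1; module)
  have hupper : Lam u ≤ (1 + r) • Lam x :=
    Matrix.le_iff.mpr (by convert Matrix.le_iff.mp hdiff_ub using 1; module)
  simp only [locNorm_eq_logDetHessNorm]
  constructor
  · calc (1 - r) * Matrix.logDetHessNorm (Lam x) (Lam v)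
        ≤ (1 + r)⁻¹ * Matrix.logDetHessNorm (Lam x) (Lam v) := by
          refine mul_le_mul_of_nonneg_right ?_ (Real.sqrt_nonneg _)
          rw [← one_div, le_div_iff₀ (by linarith)]
          nlinarith
      _ = Matrix.logDetHessNorm ((1 + r) • Lam x) (Lam v) :=
          (Matrix.logDetHessNorm_smul hx.isUnit (by linarith) _).symm
      _ ≤ Matrix.logDetHessNorm (Lam u) (Lam v) :=
          (hx.smul hr1 |>.of_le hlower).logDetHessNorm_le_of_le hupper (hherm v)
  · calc Matrix.logDetHessNorm (Lam u) (Lam v)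
        ≤ Matrix.logDetHessNorm ((1 - r) • Lam x) (Lam v) :=
          (hx.smul hr1).logDetHessNorm_le_of_le hlower (hherm v)
      _ = (1 - r)⁻¹ * Matrix.logDetHessNorm (Lam x) (Lam v) :=
          Matrix.logDetHessNorm_smul hx.isUnit hr1 _

/-- self-concordance norm comparison inside the Dikin ellipsoid. -/
theorem stmt1 {U L : ℕ} (hU : 0 < U) (hL : 0 < L)
    (Lam : (Fin U → ℝ) →ₗ[ℝ] Matrix (Fin L) (Fin L) ℝ)
    (hinj : Function.Injective Lam) (hsym : ∀ v, (Lam v).IsSymm)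
    (x u : Fin U → ℝ) (hx : (Lam x).PosDef)
    (hu : locNorm Lam x (u - x) < 1)
    (v : Fin U → ℝ) (hv : v ≠ 0) :
    (1 - locNorm Lam x (u - x)) * locNorm Lam x v ≤ locNorm Lam u v ∧
      locNorm Lam u v ≤ (1 - locNorm Lam x (u - x))⁻¹ * locNorm Lam x v :=
  stmt1_general Lam hsym x u hx hu v
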